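/- arXiv:1205.0357 — 2 statements merged into one kernel-verified Lean document; each statement's English description precedes it below -/
import Mathlib

section
/- For term graphs g, h over a signature Σ and Δ a set of nullary symbols of Σ, there exists a Δ-homomorphism φ : g →_Δ h if and only if: (a) for all positions π, π' of g, π ∼_g π' implies π ∼_h π'; and (b) g(π) ∉ Δ implies g(π) = h(π) for all positions π of g. -/
set_option autoImplicit false

namespace TGR

/-- A signature: a type of symbols, each with a finite arity. -/
structure Signature where
  Sym : Type
  ar : Sym → ℕ

/-- The signature `Σ_⊥`: `Σ` extended by a fresh nullary symbol `⊥` (here `none`). -/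
def Signature.bot (S : Signature) : Signature where
  Sym := Option S.Sym
  ar := fun o => match o with
    | none => 0
    | some f => S.ar f

/-- A rooted graph over a signature `S` with nodes `N`: a labelling, a successor
function respecting arities, and a root node. -/
structure TermGraph (S : Signature) (N : Type) where
  lab : N → S.Sym
  suc : (n : N) → Fin (S.ar (lab n)) → N
  root : N

namespace TermGraph

variable {S : Signature} {N M K : Type}

/-- `g.IsPos π n`: `π` is a position (path of successor indices from the root) of node `n`. -/
inductive IsPos (g : TermGraph S N) : List ℕ → N → Prop
  | root : IsPos g [] g.root
  | step {π : List ℕ} {n : N} (h : IsPos g π n) (i : Fin (S.ar (g.lab n))) :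
      IsPos g (π ++ [(i : ℕ)]) (g.suc n i)

/-- All nodes are reachable from the root. -/
def Reachable (g : TermGraph S N) : Prop :=
  ∀ n : N, ∃ π : List ℕ, g.IsPos π n

/-- The set of positions of `g`. -/
def pos (g : TermGraph S N) : Set (List ℕ) :=
  {π | ∃ n : N, g.IsPos π n}

/-- The set of positions of node `n` in `g`. -/
def nodePos (g : TermGraph S N) (n : N) : Set (List ℕ) :=
  {π | g.IsPos π n}

/-- `π ∼_g π'`: `π` and `π'` are positions of the same node. -/
def Aliases (g : TermGraph S N) (π π' : List ℕ) : Prop :=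
  ∃ n : N, g.IsPos π n ∧ g.IsPos π' n

/-- A position is acyclic if it passes no node twice. -/
def IsAcyclicPos (g : TermGraph S N) (π : List ℕ) : Prop :=
  ∀ (π₁ π₂ : List ℕ) (n : N), π₁ <+: π₂ → π₂ <+: π →
    g.IsPos π₁ n → g.IsPos π₂ n → π₁ = π₂

/-- The set of acyclic positions of node `n` in `g`. -/
def nodePosAcy (g : TermGraph S N) (n : N) : Set (List ℕ) :=
  {π | g.IsPos π n ∧ g.IsAcyclicPos π}

/-- The set of acyclic positions of `g`. -/
def posAcy (g : TermGraph S N) : Set (List ℕ) :=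
  {π | (∃ n : N, g.IsPos π n) ∧ g.IsAcyclicPos π}

/-- The depth of a node: the minimal length of its positions. -/
noncomputable def depth (g : TermGraph S N) (n : N) : ℕ :=
  sInf {k : ℕ | ∃ π : List ℕ, g.IsPos π n ∧ π.length = k}

open Classical in
/-- The (unique) node at a position. -/
noncomputable def nodeAt (g : TermGraph S N) (π : List ℕ) : N :=
  if h : ∃ n : N, g.IsPos π n then h.choose else g.root

/-- The label `g(π)` at a position. -/
noncomputable def labAt (g : TermGraph S N) (π : List ℕ) : S.Sym :=
  g.lab (g.nodeAt π)

/-- `Δ`-homomorphism: root, labelling and successor conditions, the latter two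
suspended on `Δ`-labelled nodes. -/
structure IsDHom (Δ : Set S.Sym) (g : TermGraph S N) (h : TermGraph S M)
    (φ : N → M) : Prop where
  root_eq : φ g.root = h.root
  lab_eq : ∀ n : N, g.lab n ∉ Δ → h.lab (φ n) = g.lab n
  suc_eq : ∀ n : N, g.lab n ∉ Δ → ∀ (i : ℕ) (hi : i < S.ar (g.lab n))
      (hi' : i < S.ar (h.lab (φ n))),
      φ (g.suc n ⟨i, hi⟩) = h.suc (φ n) ⟨i, hi'⟩

/-- Rigidity: `Pa_g(n) = Pa_h(φ n)` for all non-`Δ`-labelled nodes `n`. -/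
def IsRigid (Δ : Set S.Sym) (g : TermGraph S N) (h : TermGraph S M)
    (φ : N → M) : Prop :=
  ∀ n : N, g.lab n ∉ Δ → g.nodePosAcy n = h.nodePosAcy (φ n)

/-- Rigid `Δ`-homomorphism. -/
def IsRigidDHom (Δ : Set S.Sym) (g : TermGraph S N) (h : TermGraph S M)
    (φ : N → M) : Prop :=
  IsDHom Δ g h φ ∧ IsRigid Δ g h φ

/-- Isomorphism of term graphs: a homomorphism with an inverse homomorphism. -/
def Iso (g : TermGraph S N) (h : TermGraph S M) : Prop :=
  ∃ (φ : N → M) (ψ : M → N), IsDHom ∅ g h φ ∧ IsDHom ∅ h g ψ ∧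
    (∀ n : N, ψ (φ n) = n) ∧ (∀ m : M, φ (ψ m) = m)

/-- A partial term graph (over `Σ_⊥`) is total if no node is labelled `⊥`. -/
def Total (g : TermGraph S.bot N) : Prop := ∀ n : N, g.lab n ≠ none

/-- Rigid `⊥`-homomorphism between partial term graphs. -/
def IsRigidBotHom (g : TermGraph S.bot N) (h : TermGraph S.bot M)
    (φ : N → M) : Prop :=
  IsRigidDHom ({none} : Set (Option S.Sym)) g h φ

/-- The `⊥`-depth of a partial term graph: the minimal depth of a `⊥`-labelled
node, `ω` (`⊤`) if there is none. -/
noncomputable def botDepth (g : TermGraph S.bot N) : ℕ∞ :=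
  sInf {d : ℕ∞ | ∃ n : N, g.lab n = none ∧ (g.depth n : ℕ∞) = d}

/-- `m` is an acyclic predecessor of `n`: some acyclic position `π ++ [i]` of `n`
has `π` a position of `m`. -/
def acyPred (g : TermGraph S N) (n : N) : Set N :=
  {m | ∃ (π : List ℕ) (i : ℕ), (π ++ [i]) ∈ g.nodePosAcy n ∧ g.IsPos π m}

/-- Retained nodes of the truncation at depth `d`: the least set of nodes
containing all nodes of depth `< d` and closed under acyclic predecessors. -/
inductive Retained (g : TermGraph S N) (d : ℕ) : N → Prop
  | shallow {n : N} : g.depth n < d → Retained g d n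
  | pred {n m : N} : Retained g d n → m ∈ g.acyPred n → Retained g d m

theorem not_retained_zero {g : TermGraph S N} (n : N) : ¬ g.Retained 0 n := by
  intro h
  induction h with
  | shallow hd => exact Nat.not_lt_zero _ hd
  | pred _ _ ih => exact ih

/-- Fringe nodes of the truncation at depth `d` (a pair `(n, i)` stands for the
fresh node `n^i`); at depth `0` the fringe is just (a copy of) the root. -/
def IsFringe (g : TermGraph S.bot N) (d : ℕ) (p : N × ℕ) : Prop :=
  if d = 0 then p = (g.root, 0)
  else g.Retained d p.1 ∧ ∃ h : p.2 < S.bot.ar (g.lab p.1),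
    (¬ g.Retained d (g.suc p.1 ⟨p.2, h⟩) ∨
      (d - 1 ≤ g.depth p.1 ∧ p.1 ∉ g.acyPred (g.suc p.1 ⟨p.2, h⟩)))

/-- The node set of the rigid truncation: retained nodes plus fringe nodes. -/
def TNode (g : TermGraph S.bot N) (d : ℕ) : Type :=
  {x : N ⊕ (N × ℕ) // Sum.elim (g.Retained d) (g.IsFringe d) x}

def truncLab (g : TermGraph S.bot N) (d : ℕ) (x : TNode g d) : S.bot.Sym :=
  Sum.elim (fun n => g.lab n) (fun _ => none) x.1

open Classical in
noncomputable def truncSuc (g : TermGraph S.bot N) (d : ℕ) :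
    (x : TNode g d) → Fin (S.bot.ar (truncLab g d x)) → TNode g d
  | ⟨Sum.inl n, hn⟩ => fun i =>
      if hf : g.IsFringe d (n, (i : ℕ)) then ⟨Sum.inr (n, (i : ℕ)), hf⟩
      else
        ⟨Sum.inl (g.suc n ⟨(i : ℕ), i.isLt⟩), by
          show g.Retained d (g.suc n ⟨(i : ℕ), i.isLt⟩)
          rcases Nat.eq_zero_or_pos d with hd | hd
          · subst hd
            exact ((not_retained_zero n) hn).elim
          · by_contra hc
            apply hf
            show g.IsFringe d (n, (i : ℕ))
            unfold IsFringe
            rw [if_neg (Nat.pos_iff_ne_zero.mp hd)]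
            exact ⟨hn, i.isLt, Or.inl hc⟩⟩
  | ⟨Sum.inr p, hp⟩ => fun i => absurd i.isLt (Nat.not_lt_zero _)

noncomputable def truncRoot (g : TermGraph S.bot N) (d : ℕ) : TNode g d :=
  if hd : d = 0 then
    ⟨Sum.inr (g.root, 0), by
      subst hd
      show g.IsFringe 0 (g.root, 0)
      simp [IsFringe]⟩
  else
    ⟨Sum.inl g.root, by
      show g.Retained d g.root
      exact Retained.shallow (lt_of_le_of_lt
        (Nat.sInf_le ⟨[], IsPos.root, rfl⟩) (Nat.pos_of_ne_zero hd))⟩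

/-- The rigid truncation `g†d` of a partial term graph at finite depth `d`. -/
noncomputable def trunc (g : TermGraph S.bot N) (d : ℕ) :
    TermGraph S.bot (TNode g d) where
  lab := truncLab g d
  suc := truncSuc g d
  root := truncRoot g d

end TermGraph

/-- A canonical term graph: a term graph whose nodes are sets of positions,
each node being exactly its set of positions, with all nodes reachable. -/
structure CTG (S : Signature) where
  nodes : Set (Set (List ℕ))
  tg : TermGraph S ↥nodes
  reach : tg.Reachable
  canon : ∀ n : ↥nodes, (n : Set (List ℕ)) = tg.nodePos n

namespace CTG

variable {S : Signature}

def pos (g : CTG S) : Set (List ℕ) := g.tg.pos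
def Aliases (g : CTG S) : List ℕ → List ℕ → Prop := g.tg.Aliases
def posAcy (g : CTG S) : Set (List ℕ) := g.tg.posAcy
noncomputable def labAt (g : CTG S) : List ℕ → S.Sym := g.tg.labAt

/-- A canonical partial term graph is total if it has no `⊥`-labelled node. -/
def Total (g : CTG S.bot) : Prop := g.tg.Total

/-- The rigid partial order `g ≤⊥r h`: there is a rigid `⊥`-homomorphism
from `g` to `h`. -/
def LeR (g h : CTG S.bot) : Prop :=
  ∃ φ, TermGraph.IsRigidBotHom g.tg h.tg φ

noncomputable def botDepth (g : CTG S.bot) : ℕ∞ := g.tg.botDepth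

/-- `TruncIso g h d`: the rigid truncations of `g` and `h` at depth `d ≤ ω`
are isomorphic (`g†ω = g`). -/
def TruncIso {N M : Type} (g : TermGraph S.bot N) (h : TermGraph S.bot M)
    (d : ℕ∞) : Prop :=
  (d = ⊤ → TermGraph.Iso g h) ∧
  ∀ k : ℕ, d = (k : ℕ∞) → TermGraph.Iso (g.trunc k) (h.trunc k)

/-- The rigid similarity `sim†(g,h)`: the maximal `d ≤ ω` such that
`g†d ≅ h†d`. -/
noncomputable def simr (g h : CTG S.bot) : ℕ∞ :=
  sSup {d : ℕ∞ | TruncIso g.tg h.tg d}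

open Classical in
/-- The rigid distance `d†(g,h) = 2^{-sim†(g,h)}` (with `2^{-ω} = 0`). -/
noncomputable def rdist (g h : CTG S.bot) : ℝ :=
  if simr g h = ⊤ then 0 else (1 / 2 : ℝ) ^ (simr g h).toNat

def IsUB (A : Set (CTG S.bot)) (u : CTG S.bot) : Prop := ∀ g ∈ A, LeR g u

def IsLubR (A : Set (CTG S.bot)) (u : CTG S.bot) : Prop :=
  IsUB A u ∧ ∀ v, IsUB A v → LeR u v

def IsLB (A : Set (CTG S.bot)) (l : CTG S.bot) : Prop := ∀ g ∈ A, LeR l g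

def IsGlbR (A : Set (CTG S.bot)) (l : CTG S.bot) : Prop :=
  IsLB A l ∧ ∀ m, IsLB A m → LeR m l

/-- A directed set: non-empty and every two elements have an upper bound inside. -/
def DirectedR (A : Set (CTG S.bot)) : Prop :=
  A.Nonempty ∧ ∀ g ∈ A, ∀ h ∈ A, ∃ u ∈ A, LeR g u ∧ LeR h u

/-- `L` is the limit inferior `⨆_{β<α} ⨅_{β≤ι<α} f ι` of the ordinal-indexed
sequence `(f ι)_{ι<α}` in the rigid partial order. -/
def IsLiminfR (α : Ordinal.{0}) (f : Ordinal.{0} → CTG S.bot) (L : CTG S.bot) : Prop :=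
  ∃ inf : Ordinal.{0} → CTG S.bot,
    (∀ β < α, IsGlbR {g | ∃ ι, β ≤ ι ∧ ι < α ∧ g = f ι} (inf β)) ∧
    IsLubR {g | ∃ β < α, g = inf β} L

/-- Cauchy condition for an ordinal-indexed sequence w.r.t. the rigid distance. -/
def OrdCauchy (α : Ordinal.{0}) (f : Ordinal.{0} → CTG S.bot) : Prop :=
  ∀ ε : ℝ, 0 < ε → ∃ β < α, ∀ ι ι' : Ordinal.{0},
    β < ι → ι < ι' → ι' < α → rdist (f ι) (f ι') < ε

/-- Convergence of an ordinal-indexed sequence to `g` w.r.t. the rigid distance. -/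
def OrdTendsto (α : Ordinal.{0}) (f : Ordinal.{0} → CTG S.bot) (g : CTG S.bot) : Prop :=
  ∀ ε : ℝ, 0 < ε → ∃ β < α, ∀ ι : Ordinal.{0}, β < ι → ι < α → rdist (f ι) g < ε

/-- `u` is the unravelling of `g`: the term tree with the same positions and
labels as `g` and trivial aliasing. -/
def IsUnravelling (g u : CTG S) : Prop :=
  u.pos = g.pos ∧ (∀ π ∈ g.pos, u.labAt π = g.labAt π) ∧
  (∀ π π' : List ℕ, u.Aliases π π' ↔ (π ∈ g.pos ∧ π = π'))

end CTG

/-- A labelled quotient tree over a signature `S`. -/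
structure LQT (S : Signature) where
  P : Set (List ℕ)
  nonempty : P.Nonempty
  l : List ℕ → S.Sym
  rel : List ℕ → List ℕ → Prop
  rel_refl : ∀ π ∈ P, rel π π
  rel_symm : ∀ π π' : List ℕ, rel π π' → rel π' π
  rel_trans : ∀ π π' π'' : List ℕ, rel π π' → rel π' π'' → rel π π''
  rel_mem : ∀ π π' : List ℕ, rel π π' → π ∈ P ∧ π' ∈ P
  reach_mem : ∀ (π : List ℕ) (i : ℕ), π ++ [i] ∈ P → π ∈ P
  reach_ar : ∀ (π : List ℕ) (i : ℕ), π ++ [i] ∈ P → i < S.ar (l π)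
  congr_lab : ∀ π π' : List ℕ, rel π π' → l π = l π'
  congr_suc : ∀ (π π' : List ℕ) (i : ℕ), rel π π' → i < S.ar (l π) →
    rel (π ++ [i]) (π' ++ [i])

end TGR

namespace TGR

namespace Aux

variable {S : Signature} {N M : Type}

theorem isPos_nil {g : TermGraph S N} {π : List ℕ} {n : N}
    (h : g.IsPos π n) (hπ : π = []) : n = g.root := by
  cases h with
  | root => rfl
  | step h i => simp at hπ

theorem isPos_snoc {g : TermGraph S N} {π π' : List ℕ} {i : ℕ} {n : N}
    (h : g.IsPos π n) (hπ : π = π' ++ [i]) :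
    ∃ (m : N) (_ : g.IsPos π' m) (hi : i < S.ar (g.lab m)),
      n = g.suc m ⟨i, hi⟩ := by
  cases h with
  | root => simp at hπ
  | @step π₀ m hp j =>
    obtain ⟨hπ₀, hj⟩ : π₀ = π' ∧ (j : ℕ) = i := by
      have := List.append_inj' hπ rfl
      simpa using this
    subst hπ₀
    exact ⟨m, hp, hj ▸ j.isLt, by subst hj; rfl⟩

theorem isPos_unique {g : TermGraph S N} {π : List ℕ} {n n' : N}
    (h1 : g.IsPos π n) (h2 : g.IsPos π n') : n = n' := by
  induction π using List.reverseRecOn generalizing n n' with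
  | nil => rw [isPos_nil h1 rfl, isPos_nil h2 rfl]
  | append_singleton π i ih =>
    obtain ⟨m, hm, hi, rfl⟩ := isPos_snoc h1 rfl
    obtain ⟨m', hm', hi', rfl⟩ := isPos_snoc h2 rfl
    have : m = m' := ih hm hm'
    subst this
    rfl

theorem nodeAt_eq {g : TermGraph S N} {π : List ℕ} {n : N}
    (hp : g.IsPos π n) : g.nodeAt π = n := by
  have hex : ∃ m : N, g.IsPos π m := ⟨n, hp⟩
  rw [TermGraph.nodeAt, dif_pos hex]
  exact isPos_unique hex.choose_spec hp

theorem labAt_eq {g : TermGraph S N} {π : List ℕ} {n : N}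
    (hp : g.IsPos π n) : g.labAt π = g.lab n := by
  rw [TermGraph.labAt, nodeAt_eq hp]

/-- A `Δ`-homomorphism preserves positions (using that `Δ`-symbols are nullary). -/
theorem dhom_isPos {Δ : Set S.Sym} (hΔ : ∀ f ∈ Δ, S.ar f = 0)
    {g : TermGraph S N} {h : TermGraph S M} {φ : N → M}
    (hφ : TermGraph.IsDHom Δ g h φ) {π : List ℕ} {n : N}
    (hp : g.IsPos π n) : h.IsPos π (φ n) := by
  induction hp with
  | root => rw [hφ.root_eq]; exact TermGraph.IsPos.root
  | @step π n hp i ih =>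
    have hnΔ : g.lab n ∉ Δ := by
      intro hmem
      have := hΔ _ hmem
      exact absurd i.isLt (by omega)
    have hlab := hφ.lab_eq n hnΔ
    have hi' : (i : ℕ) < S.ar (h.lab (φ n)) := by rw [hlab]; exact i.isLt
    have hs := hφ.suc_eq n hnΔ (i : ℕ) i.isLt hi'
    have := TermGraph.IsPos.step ih ⟨(i : ℕ), hi'⟩
    simpa [← hs] using this

end Aux

open Aux in
/-- There exists a `Δ`-homomorphism `φ : g →_Δ h` iff
(a) aliasing in `g` implies aliasing in `h`, and (b) `g(π) ∉ Δ` implies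
`g(π) = h(π)` for all positions `π` of `g`. -/
theorem dhom_existence_characterisation (S : Signature) (Δ : Set S.Sym)
    (hΔ : ∀ f ∈ Δ, S.ar f = 0) (N M : Type)
    (g : TermGraph S N) (h : TermGraph S M)
    (hg : g.Reachable) (hh : h.Reachable) :
    (∃ φ : N → M, TermGraph.IsDHom Δ g h φ) ↔
      ((∀ π π' : List ℕ, g.Aliases π π' → h.Aliases π π') ∧
       (∀ π ∈ g.pos, g.labAt π ∉ Δ → g.labAt π = h.labAt π)) := by
  constructor
  · rintro ⟨φ, hφ⟩
    constructor
    · rintro π π' ⟨n, h1, h2⟩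
      exact ⟨φ n, dhom_isPos hΔ hφ h1, dhom_isPos hΔ hφ h2⟩
    · rintro π ⟨n, hp⟩ hnot
      rw [labAt_eq hp] at hnot ⊢
      rw [labAt_eq (dhom_isPos hΔ hφ hp)]
      exact (hφ.lab_eq n hnot).symm
  · rintro ⟨ha, hb⟩
    -- every position of g is a position of h
    have hpos : ∀ {π : List ℕ} {n : N}, g.IsPos π n → ∃ m : M, h.IsPos π m := by
      intro π n hp
      obtain ⟨m, hm, -⟩ := ha π π ⟨n, hp, hp⟩
      exact ⟨m, hm⟩
    -- define φ
    choose pi hpi using hg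
    refine ⟨fun n => h.nodeAt (pi n), ?_⟩
    have key : ∀ (n : N) (π : List ℕ), g.IsPos π n → h.IsPos π (h.nodeAt (pi n)) := by
      intro n π hp
      obtain ⟨m, hm1, hm2⟩ := ha (pi n) π ⟨n, hpi n, hp⟩
      rwa [nodeAt_eq hm1]
    have keylab : ∀ (n : N), g.lab n ∉ Δ → h.lab (h.nodeAt (pi n)) = g.lab n := by
      intro n hn
      have h1 := hb (pi n) ⟨n, hpi n⟩ (by rwa [labAt_eq (hpi n)])
      rw [labAt_eq (hpi n), labAt_eq (key n (pi n) (hpi n))] at h1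
      exact h1.symm
    constructor
    · exact isPos_unique (key g.root [] TermGraph.IsPos.root) TermGraph.IsPos.root
    · exact keylab
    · intro n hn i hi hi'
      have hstep : g.IsPos (pi n ++ [i]) (g.suc n ⟨i, hi⟩) :=
        TermGraph.IsPos.step (hpi n) ⟨i, hi⟩
      have hstep' : h.IsPos (pi n ++ [i]) (h.suc (h.nodeAt (pi n)) ⟨i, hi'⟩) :=
        TermGraph.IsPos.step (key n (pi n) (hpi n)) ⟨i, hi'⟩
      exact isPos_unique (key _ _ hstep) hstep'

end TGR
end

section
/- For every ordinal-indexed sequence (g_ι)_{ι<α} of canonical term graphs over Σ_⊥, the unravelling of the limit inferior is below the limit inferior of the unravellings in the rigid partial order: U(liminf_{ι→α} g_ι) ≤⊥r liminf_{ι→α} U(g_ι), where both limit inferiors are taken in the complete semilattice of canonical partial term graphs ordered by ≤⊥r. Moreover, if (g_ι)_{ι<α} is a non-empty convergent sequence of total canonical term graphs in the metric space with the rigid distance d†, then (U(g_ι))_{ι<α} also converges and U(lim_{ι→α} g_ι) = lim_{ι→α} U(g_ι). -/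
/-!
Unravelling keeps the positions and labels of a term graph and forgets all sharing. A term
tree `T` is `≤⊥r`-below `h` exactly when every non-`⊥` position `π` of `T` is, in `h`, a position
of a node with the same label whose only acyclic position is `π`.

For the limit inferior: a non-`⊥` label of `U(liminf g_ι)` at `π` already occurs at `π` in some
infimum `⨅_{β≤ι<α} g_ι`, because the least upper bound of a directed family lies below the
union of its members. Unravelling is monotone, so the unravelling of that infimum lies below
every `U(g_ι)` with `β ≤ ι`, hence below `⨅_{β≤ι<α} U(g_ι)` and below `liminf U(g_ι)`.

For the metric part: the rigid truncation of a tree at depth `k` is determined by the positions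
of length `< k` and their labels, and `g†d ≅ h†d` makes `g` and `h` agree on these data for all
`k ≤ d`. Hence `sim†(U g, U h) ≥ sim†(g, h)`: unravelling is non-expansive for `d†`.
-/

set_option autoImplicit false

namespace TGR

theorem Signature.exists_eq_some_of_lt_ar_bot {S : Signature} {o : Option S.Sym} {i : ℕ}
    (hi : i < S.bot.ar o) : ∃ a, o = some a := by
  cases o with
  | none => exact absurd hi (Nat.not_lt_zero i)
  | some a => exact ⟨a, rfl⟩

theorem Signature.ne_none_of_lt_ar_bot {S : Signature} {o : Option S.Sym} {i : ℕ}
    (hi : i < S.bot.ar o) : o ≠ none := by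
  obtain ⟨a, rfl⟩ := Signature.exists_eq_some_of_lt_ar_bot hi
  exact Option.some_ne_none a

namespace TermGraph

variable {S : Signature} {N M K : Type}

theorem eq_root_of_isPos_nil {g : TermGraph S N} {n : N} (h : g.IsPos [] n) : n = g.root := by
  generalize hq : ([] : List ℕ) = q at h
  cases h with
  | root => rfl
  | step _ _ => simp at hq

theorem exists_of_isPos_append_singleton {g : TermGraph S N} {π : List ℕ} {i : ℕ} {m : N}
    (h : g.IsPos (π ++ [i]) m) :
    ∃ n, g.IsPos π n ∧ ∃ hi : i < S.ar (g.lab n), m = g.suc n ⟨i, hi⟩ := by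
  generalize hq : π ++ [i] = q at h
  cases h with
  | root => simp at hq
  | step h j =>
    obtain ⟨rfl, hj⟩ := List.append_inj' hq rfl
    obtain rfl : (j : ℕ) = i := by simpa using hj.symm
    exact ⟨_, h, j.isLt, rfl⟩

theorem IsPos.unique {g : TermGraph S N} {π : List ℕ} {n m : N}
    (hn : g.IsPos π n) (hm : g.IsPos π m) : n = m := by
  induction hn generalizing m with
  | root => exact (eq_root_of_isPos_nil hm).symm
  | step _ i ih =>
    obtain ⟨n', hn', _, rfl⟩ := exists_of_isPos_append_singleton hm
    obtain rfl := ih hn'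
    rfl

theorem nodeAt_eq {g : TermGraph S N} {π : List ℕ} {n : N} (h : g.IsPos π n) :
    g.nodeAt π = n := by
  have hex : ∃ m, g.IsPos π m := ⟨n, h⟩
  rw [nodeAt, dif_pos hex]
  exact hex.choose_spec.unique h

theorem labAt_eq {g : TermGraph S N} {π : List ℕ} {n : N} (h : g.IsPos π n) :
    g.labAt π = g.lab n := by
  rw [labAt, nodeAt_eq h]

theorem mem_pos_of_append_singleton_mem {g : TermGraph S N} {π : List ℕ} {i : ℕ}
    (h : π ++ [i] ∈ g.pos) : π ∈ g.pos := by
  obtain ⟨m, hm⟩ := h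
  obtain ⟨n, hn, _⟩ := exists_of_isPos_append_singleton hm
  exact ⟨n, hn⟩

theorem depth_le_length {g : TermGraph S N} {π : List ℕ} {n : N} (h : g.IsPos π n) :
    g.depth n ≤ π.length :=
  Nat.sInf_le ⟨π, h, rfl⟩

theorem IsDHom.isPos {Δ : Set S.Sym} {g : TermGraph S N} {h : TermGraph S M} {φ : N → M}
    (hφ : IsDHom Δ g h φ) (hΔ : ∀ a ∈ Δ, S.ar a = 0) {π : List ℕ} {n : N}
    (hn : g.IsPos π n) : h.IsPos π (φ n) := by
  induction hn with
  | root => exact hφ.root_eq ▸ .root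
  | @step _ n _ i ih =>
    have hlab : g.lab n ∉ Δ := fun hmem => (i.cast (hΔ _ hmem)).elim0
    have hi : (i : ℕ) < S.ar (h.lab (φ n)) := by rw [hφ.lab_eq n hlab]; exact i.isLt
    have hsuc : φ (g.suc n i) = h.suc (φ n) ⟨i, hi⟩ := hφ.suc_eq n hlab i i.isLt hi
    exact hsuc ▸ ih.step ⟨i, hi⟩

theorem IsRigidBotHom.isPos {g : TermGraph S.bot N} {h : TermGraph S.bot M} {φ : N → M}
    (hφ : IsRigidBotHom g h φ) {π : List ℕ} {n : N} (hn : g.IsPos π n) : h.IsPos π (φ n) :=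
  hφ.1.isPos (by rintro _ rfl; rfl) hn

theorem IsRigidBotHom.lab_eq_some {g : TermGraph S.bot N} {h : TermGraph S.bot M}
    {φ : N → M} (hφ : IsRigidBotHom g h φ) {n : N} {a : S.Sym} (ha : g.lab n = some a) :
    h.lab (φ n) = some a :=
  ha ▸ hφ.1.lab_eq n (by rw [ha]; exact Option.some_ne_none a)

theorem IsRigidBotHom.comp {g : TermGraph S.bot N} {h : TermGraph S.bot M}
    {k : TermGraph S.bot K} {φ : N → M} {ψ : M → K}
    (hφ : IsRigidBotHom g h φ) (hψ : IsRigidBotHom h k ψ) :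
    IsRigidBotHom g k (ψ ∘ φ) := by
  have hlab : ∀ n, g.lab n ∉ ({none} : Set (Option S.Sym)) →
      h.lab (φ n) ∉ ({none} : Set (Option S.Sym)) := fun n hn => hφ.1.lab_eq n hn ▸ hn
  refine ⟨⟨?_, fun n hn => ?_, fun n hn i hi hi' => ?_⟩, fun n hn => ?_⟩
  · simp only [Function.comp, hφ.1.root_eq, hψ.1.root_eq]
  · simp only [Function.comp, hψ.1.lab_eq _ (hlab n hn), hφ.1.lab_eq _ hn]
  · have hiφ : i < S.bot.ar (h.lab (φ n)) := hφ.1.lab_eq n hn ▸ hi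
    simp only [Function.comp, hφ.1.suc_eq n hn i hi hiφ, hψ.1.suc_eq _ (hlab n hn) i hiφ hi']
  · exact (hφ.2 n hn).trans (hψ.2 _ (hlab n hn))

/-- The composites fix the node at every position, hence every node. -/
theorem iso_of_isDHom {g : TermGraph S N} {h : TermGraph S M} (hg : g.Reachable)
    (hh : h.Reachable) {φ : N → M} {ψ : M → N} (hφ : IsDHom ∅ g h φ)
    (hψ : IsDHom ∅ h g ψ) : Iso g h := by
  have hψφ : ∀ n, ψ (φ n) = n := fun n => by
    obtain ⟨π, hπ⟩ := hg n
    exact (hψ.isPos (by simp) (hφ.isPos (by simp) hπ)).unique hπ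
  have hφψ : ∀ m, φ (ψ m) = m := fun m => by
    obtain ⟨π, hπ⟩ := hh m
    exact (hφ.isPos (by simp) (hψ.isPos (by simp) hπ)).unique hπ
  exact ⟨φ, ψ, hφ, hψ, hψφ, hφψ⟩

theorem Iso.symm {g : TermGraph S N} {h : TermGraph S M} (hiso : Iso g h) : Iso h g := by
  obtain ⟨φ, ψ, hφ, hψ, h1, h2⟩ := hiso
  exact ⟨ψ, φ, hψ, hφ, h2, h1⟩

theorem Iso.mem_pos {g : TermGraph S N} {h : TermGraph S M} (hiso : Iso g h)
    {π : List ℕ} (hπ : π ∈ g.pos) : π ∈ h.pos ∧ h.labAt π = g.labAt π := by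
  obtain ⟨φ, -, hφ, -⟩ := hiso
  obtain ⟨n, hn⟩ := hπ
  have hφn := hφ.isPos (by simp) hn
  exact ⟨⟨φ n, hφn⟩, by rw [labAt_eq hφn, labAt_eq hn, hφ.lab_eq n (by simp)]⟩

def AgreeBelow (g : TermGraph S N) (h : TermGraph S M) (k : ℕ) : Prop :=
  ∀ π : List ℕ, π.length < k → (π ∈ g.pos ↔ π ∈ h.pos) ∧ (π ∈ g.pos → g.labAt π = h.labAt π)

namespace AgreeBelow

variable {L : Type} {g : TermGraph S N} {h : TermGraph S M} {k : ℕ}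

theorem symm (hgh : AgreeBelow g h k) : AgreeBelow h g k := fun π hπ =>
  ⟨(hgh π hπ).1.symm, fun hp => ((hgh π hπ).2 ((hgh π hπ).1.2 hp)).symm⟩

theorem trans {l : TermGraph S L} (hgh : AgreeBelow g h k) (hhl : AgreeBelow h l k) :
    AgreeBelow g l k := fun π hπ =>
  ⟨(hgh π hπ).1.trans (hhl π hπ).1,
    fun hp => ((hgh π hπ).2 hp).trans ((hhl π hπ).2 ((hgh π hπ).1.1 hp))⟩

theorem mono {k' : ℕ} (hgh : AgreeBelow g h k) (hk : k' ≤ k) : AgreeBelow g h k' :=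
  fun π hπ => hgh π (hπ.trans_le hk)

end AgreeBelow

theorem Iso.agreeBelow {g : TermGraph S N} {h : TermGraph S M} (hiso : Iso g h) (k : ℕ) :
    AgreeBelow g h k := fun _ _ =>
  ⟨⟨fun hp => (hiso.mem_pos hp).1, fun hp => (hiso.symm.mem_pos hp).1⟩,
    fun hp => (hiso.mem_pos hp).2.symm⟩

section Truncation

variable {g : TermGraph S.bot N} {d : ℕ}

theorem trunc_root_val (hd : d ≠ 0) : ((g.trunc d).root).1 = Sum.inl g.root := by
  simp [trunc, truncRoot, hd]

theorem trunc_lab_of_val_eq_inl {x : TNode g d} {n : N} (hx : x.1 = Sum.inl n) :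
    (g.trunc d).lab x = g.lab n := by
  obtain ⟨_, _⟩ := x
  subst hx
  rfl

theorem trunc_suc_val_of_isFringe {x : TNode g d} {n : N} (hx : x.1 = Sum.inl n) {i : ℕ}
    (hi : i < S.bot.ar ((g.trunc d).lab x)) (hf : g.IsFringe d (n, i)) :
    ((g.trunc d).suc x ⟨i, hi⟩).1 = Sum.inr (n, i) := by
  obtain ⟨_, _⟩ := x
  cases hx
  simp [trunc, truncSuc, hf]

theorem trunc_suc_val_of_not_isFringe {x : TNode g d} {n : N} (hx : x.1 = Sum.inl n) {i : ℕ}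
    (hi : i < S.bot.ar ((g.trunc d).lab x)) (hf : ¬ g.IsFringe d (n, i)) :
    ((g.trunc d).suc x ⟨i, hi⟩).1 = Sum.inl (g.suc n ⟨i, trunc_lab_of_val_eq_inl hx ▸ hi⟩) := by
  obtain ⟨_, _⟩ := x
  cases hx
  simp [trunc, truncSuc, hf]

theorem not_isFringe_of_isPos {π : List ℕ} {n : N} (hn : g.IsPos π n)
    (hlen : π.length + 1 < d) (i : ℕ) : ¬ g.IsFringe d (n, i) := by
  rw [IsFringe, if_neg (by omega)]
  rintro ⟨-, hi, hnr | ⟨hdep, -⟩⟩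
  · simp only at hnr
    have := depth_le_length (hn.step ⟨i, hi⟩)
    simp only [List.length_append, List.length_singleton] at this
    exact hnr (.shallow (by omega))
  · have := depth_le_length hn
    simp only at hdep
    omega

theorem exists_isPos_trunc {π : List ℕ} {n : N} (hn : g.IsPos π n) (hlen : π.length < d) :
    ∃ x : TNode g d, x.1 = Sum.inl n ∧ (g.trunc d).IsPos π x := by
  induction hn with
  | root => exact ⟨_, trunc_root_val (Nat.ne_zero_of_lt hlen), .root⟩
  | @step π n hn i ih =>
    have hlen' : π.length + 1 < d := by simpa using hlen
    obtain ⟨x, hx, hxπ⟩ := ih (by omega)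
    have hi : (i : ℕ) < S.bot.ar ((g.trunc d).lab x) := by
      rw [trunc_lab_of_val_eq_inl hx]; exact i.isLt
    exact ⟨_, trunc_suc_val_of_not_isFringe hx hi (not_isFringe_of_isPos hn hlen' i),
      hxπ.step ⟨i, hi⟩⟩

theorem exists_isPos_of_isPos_trunc {π : List ℕ} {x : TNode g d}
    (hx : (g.trunc d).IsPos π x) (hlen : π.length < d) :
    ∃ n : N, x.1 = Sum.inl n ∧ g.IsPos π n := by
  induction hx with
  | root => exact ⟨_, trunc_root_val (Nat.ne_zero_of_lt hlen), .root⟩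
  | @step π x hx i ih =>
    have hlen' : π.length + 1 < d := by simpa using hlen
    obtain ⟨n, hxn, hn⟩ := ih (by omega)
    have hi : (i : ℕ) < S.bot.ar (g.lab n) := trunc_lab_of_val_eq_inl hxn ▸ i.isLt
    exact ⟨_, trunc_suc_val_of_not_isFringe hxn i.isLt (not_isFringe_of_isPos hn hlen' i),
      hn.step ⟨i, hi⟩⟩

theorem agreeBelow_trunc (g : TermGraph S.bot N) (d : ℕ) : AgreeBelow (g.trunc d) g d := by
  intro π hlen
  refine ⟨⟨fun ⟨x, hx⟩ => ?_, fun ⟨n, hn⟩ => ?_⟩, fun ⟨x, hx⟩ => ?_⟩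
  · obtain ⟨n, -, hn⟩ := exists_isPos_of_isPos_trunc hx hlen
    exact ⟨n, hn⟩
  · obtain ⟨x, -, hx⟩ := exists_isPos_trunc hn hlen
    exact ⟨x, hx⟩
  · obtain ⟨n, hxn, hn⟩ := exists_isPos_of_isPos_trunc hx hlen
    rw [labAt_eq hx, labAt_eq hn, trunc_lab_of_val_eq_inl hxn]

theorem agreeBelow_of_iso_trunc {h : TermGraph S.bot M} (hiso : Iso (g.trunc d) (h.trunc d)) :
    AgreeBelow g h d :=
  (agreeBelow_trunc g d).symm.trans ((hiso.agreeBelow d).trans (agreeBelow_trunc h d))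

end Truncation

end TermGraph

namespace LQT

variable {S : Signature} (Q : LQT S)

def SucClosed : Prop := ∀ π ∈ Q.P, ∀ i : ℕ, i < S.ar (Q.l π) → π ++ [i] ∈ Q.P

def classOf (π : List ℕ) : Set (List ℕ) := {π' | Q.rel π π'}

def classes : Set (Set (List ℕ)) := {A | ∃ π ∈ Q.P, A = Q.classOf π}

variable {Q}

theorem classOf_eq_of_rel {π π' : List ℕ} (h : Q.rel π π') : Q.classOf π = Q.classOf π' :=
  Set.ext fun _ => ⟨Q.rel_trans _ _ _ (Q.rel_symm _ _ h), Q.rel_trans _ _ _ h⟩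

theorem nil_mem : [] ∈ Q.P := by
  obtain ⟨π, hπ⟩ := Q.nonempty
  induction π using List.reverseRecOn with
  | nil => exact hπ
  | append_singleton π i ih => exact ih (Q.reach_mem π i hπ)

variable (Q)

noncomputable def rep (A : ↥Q.classes) : List ℕ := A.2.choose

theorem rep_mem (A : ↥Q.classes) : Q.rep A ∈ Q.P := A.2.choose_spec.1

theorem eq_classOf_rep (A : ↥Q.classes) : (A : Set (List ℕ)) = Q.classOf (Q.rep A) :=
  A.2.choose_spec.2

noncomputable def toTermGraph (hQ : Q.SucClosed) : TermGraph S ↥Q.classes where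
  lab A := Q.l (Q.rep A)
  suc A i := ⟨Q.classOf (Q.rep A ++ [(i : ℕ)]), _, hQ _ (Q.rep_mem A) i i.isLt, rfl⟩
  root := ⟨Q.classOf [], [], nil_mem, rfl⟩

theorem rel_rep_of_mem {A : ↥Q.classes} {π : List ℕ} (h : π ∈ (A : Set (List ℕ))) :
    Q.rel (Q.rep A) π := by
  rw [Q.eq_classOf_rep A] at h
  exact h

variable {Q} (hQ : Q.SucClosed)

theorem isPos_toTermGraph_classOf {π : List ℕ} (hπ : π ∈ Q.P) :
    (Q.toTermGraph hQ).IsPos π ⟨Q.classOf π, π, hπ, rfl⟩ := by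
  induction π using List.reverseRecOn with
  | nil => exact .root
  | append_singleton π i ih =>
    have hπ' := Q.reach_mem π i hπ
    have hrel : Q.rel (Q.rep ⟨Q.classOf π, π, hπ', rfl⟩) π := Q.rel_rep_of_mem (Q.rel_refl π hπ')
    have hi : i < S.ar ((Q.toTermGraph hQ).lab ⟨Q.classOf π, π, hπ', rfl⟩) :=
      show i < S.ar (Q.l _) from (Q.congr_lab _ _ hrel).symm ▸ Q.reach_ar π i hπ
    have hsuc : (Q.toTermGraph hQ).suc ⟨Q.classOf π, π, hπ', rfl⟩ ⟨i, hi⟩ =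
        ⟨Q.classOf (π ++ [i]), π ++ [i], hπ, rfl⟩ :=
      Subtype.ext (classOf_eq_of_rel (Q.congr_suc _ _ _ hrel hi))
    exact hsuc ▸ (ih hπ').step ⟨i, hi⟩

theorem isPos_toTermGraph_iff {π : List ℕ} {A : ↥Q.classes} :
    (Q.toTermGraph hQ).IsPos π A ↔ π ∈ Q.P ∧ (A : Set (List ℕ)) = Q.classOf π := by
  refine ⟨fun h => ?_, fun ⟨hπ, hA⟩ => ?_⟩
  · induction h with
    | root => exact ⟨nil_mem, rfl⟩
    | @step π B _ i ih =>
      obtain ⟨hπ, hB⟩ := ih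
      have hrel : Q.rel (Q.rep B ++ [(i : ℕ)]) (π ++ [(i : ℕ)]) :=
        Q.congr_suc _ _ _ (Q.rel_rep_of_mem (hB ▸ Q.rel_refl π hπ)) i.isLt
      exact ⟨(Q.rel_mem _ _ hrel).2, classOf_eq_of_rel hrel⟩
  · obtain rfl : A = ⟨Q.classOf π, π, hπ, rfl⟩ := Subtype.ext hA
    exact isPos_toTermGraph_classOf hQ hπ

theorem toTermGraph_lab_of_isPos {π : List ℕ} {A : ↥Q.classes}
    (h : (Q.toTermGraph hQ).IsPos π A) : (Q.toTermGraph hQ).lab A = Q.l π := by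
  obtain ⟨hπ, hA⟩ := (isPos_toTermGraph_iff hQ).1 h
  exact Q.congr_lab _ _ (Q.rel_rep_of_mem (hA ▸ Q.rel_refl π hπ))

noncomputable def toCTG : CTG S where
  nodes := Q.classes
  tg := Q.toTermGraph hQ
  reach A := ⟨Q.rep A, (isPos_toTermGraph_iff hQ).2 ⟨Q.rep_mem A, Q.eq_classOf_rep A⟩⟩
  canon A := by
    ext π
    refine ⟨fun hπ => (isPos_toTermGraph_iff hQ).2 ?_, fun h => ?_⟩
    · have hrel := Q.rel_rep_of_mem hπ
      exact ⟨(Q.rel_mem _ _ hrel).2, (Q.eq_classOf_rep A).trans (classOf_eq_of_rel hrel)⟩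
    · obtain ⟨hπ, hA⟩ := (isPos_toTermGraph_iff hQ).1 h
      exact hA ▸ Q.rel_refl π hπ

theorem toCTG_pos : (Q.toCTG hQ).pos = Q.P :=
  Set.ext fun _ => ⟨fun ⟨_, h⟩ => ((isPos_toTermGraph_iff hQ).1 h).1,
    fun hπ => ⟨_, isPos_toTermGraph_classOf hQ hπ⟩⟩

theorem toCTG_labAt {π : List ℕ} (hπ : π ∈ Q.P) : (Q.toCTG hQ).labAt π = Q.l π :=
  (TermGraph.labAt_eq (isPos_toTermGraph_classOf hQ hπ)).trans
    (toTermGraph_lab_of_isPos hQ (isPos_toTermGraph_classOf hQ hπ))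

theorem toCTG_aliases_iff {π π' : List ℕ} : (Q.toCTG hQ).Aliases π π' ↔ Q.rel π π' := by
  refine ⟨fun ⟨A, h, h'⟩ => ?_, fun hrel => ?_⟩
  · obtain ⟨hπ, hA⟩ := (isPos_toTermGraph_iff hQ).1 h
    obtain ⟨hπ', hA'⟩ := (isPos_toTermGraph_iff hQ).1 h'
    have : π' ∈ Q.classOf π := hA ▸ hA' ▸ Q.rel_refl π' hπ'
    exact this
  · obtain ⟨hπ, hπ'⟩ := Q.rel_mem _ _ hrel
    exact ⟨_, isPos_toTermGraph_classOf hQ hπ,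
      (isPos_toTermGraph_iff hQ).2 ⟨hπ', classOf_eq_of_rel hrel⟩⟩

end LQT

namespace CTG

variable {S : Signature}

theorem labAt_eq {g : CTG S} {π : List ℕ} {n : ↥g.nodes} (h : g.tg.IsPos π n) :
    g.labAt π = g.tg.lab n :=
  TermGraph.labAt_eq h

theorem LeR.trans {g h k : CTG S.bot} (hgh : LeR g h) (hhk : LeR h k) : LeR g k :=
  let ⟨_, hφ⟩ := hgh
  let ⟨_, hψ⟩ := hhk
  ⟨_, hφ.comp hψ⟩

noncomputable def posOf (g : CTG S) (n : ↥g.nodes) : List ℕ := (g.reach n).choose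

theorem isPos_posOf (g : CTG S) (n : ↥g.nodes) : g.tg.IsPos (g.posOf n) n :=
  (g.reach n).choose_spec

def IsTree (g : CTG S) : Prop := ∀ π π' : List ℕ, g.Aliases π π' → π = π'

namespace IsTree

variable {T : CTG S}

theorem isAcyclicPos (hT : T.IsTree) (π : List ℕ) : T.tg.IsAcyclicPos π :=
  fun _ _ n _ _ h₁ h₂ => hT _ _ ⟨n, h₁, h₂⟩

theorem nodePosAcy_eq (hT : T.IsTree) {π : List ℕ} {n : ↥T.nodes} (h : T.tg.IsPos π n) :
    T.tg.nodePosAcy n = {π} :=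
  Set.ext fun _ => ⟨fun h' => (hT _ _ ⟨n, h, h'.1⟩).symm,
    fun h' => h'.symm ▸ ⟨h, hT.isAcyclicPos π⟩⟩

theorem depth_eq (hT : T.IsTree) {π : List ℕ} {n : ↥T.nodes} (h : T.tg.IsPos π n) :
    T.tg.depth n = π.length := by
  have : {k | ∃ π', T.tg.IsPos π' n ∧ π'.length = k} = {π.length} :=
    Set.ext fun k => ⟨fun ⟨π', h', hk⟩ => hk ▸ hT _ _ ⟨n, h', h⟩ ▸ rfl, fun hk => ⟨π, h, hk.symm⟩⟩
  rw [TermGraph.depth, this, csInf_singleton]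

theorem posOf_eq (hT : T.IsTree) {π : List ℕ} {n : ↥T.nodes} (h : T.tg.IsPos π n) :
    T.posOf n = π :=
  hT _ _ ⟨n, T.isPos_posOf n, h⟩

end IsTree

theorem IsUnravelling.isTree {g u : CTG S} (h : IsUnravelling g u) : u.IsTree :=
  fun π π' ha => ((h.2.2 π π').1 ha).2

theorem leR_iff_of_isTree {T h : CTG S.bot} (hT : T.IsTree) :
    LeR T h ↔ ∀ (π : List ℕ) (n : ↥T.nodes), T.tg.IsPos π n → T.tg.lab n ≠ none →
      ∃ m : ↥h.nodes, h.tg.IsPos π m ∧ h.tg.lab m = T.tg.lab n ∧ h.tg.nodePosAcy m = {π} := by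
  refine ⟨fun ⟨φ, hφ⟩ π n hn hlab => ⟨φ n, hφ.isPos hn, hφ.1.lab_eq n hlab, ?_⟩, fun H => ?_⟩
  · rw [← hφ.2 n hlab, hT.nodePosAcy_eq hn]
  have hnode : ∀ n : ↥T.nodes, T.tg.lab n ≠ none →
      h.tg.IsPos (T.posOf n) (h.tg.nodeAt (T.posOf n)) ∧
        h.tg.lab (h.tg.nodeAt (T.posOf n)) = T.tg.lab n ∧
        h.tg.nodePosAcy (h.tg.nodeAt (T.posOf n)) = {T.posOf n} := fun n hn => by
    obtain ⟨m, hm, hlab⟩ := H _ n (T.isPos_posOf n) hn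
    rw [TermGraph.nodeAt_eq hm]
    exact ⟨hm, hlab⟩
  refine ⟨fun n => h.tg.nodeAt (T.posOf n), ⟨⟨?_, fun n hn => (hnode n hn).2.1, ?_⟩, ?_⟩⟩
  · simp only [hT.posOf_eq .root, TermGraph.nodeAt_eq .root]
  · intro n hn i hi hi'
    rw [hT.posOf_eq ((T.isPos_posOf n).step ⟨i, hi⟩)]
    exact TermGraph.nodeAt_eq ((hnode n hn).1.step ⟨i, hi'⟩)
  · intro n hn
    rw [(hnode n hn).2.2, hT.nodePosAcy_eq (T.isPos_posOf n)]

noncomputable def unravellingLQT (g : CTG S) : LQT S where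
  P := g.pos
  nonempty := ⟨[], g.tg.root, .root⟩
  l := g.labAt
  rel π π' := π ∈ g.pos ∧ π = π'
  rel_refl _ h := ⟨h, rfl⟩
  rel_symm _ _ h := ⟨h.2 ▸ h.1, h.2.symm⟩
  rel_trans _ _ _ h h' := ⟨h.1, h.2.trans h'.2⟩
  rel_mem _ _ h := ⟨h.1, h.2 ▸ h.1⟩
  reach_mem _ _ h := TermGraph.mem_pos_of_append_singleton_mem h
  reach_ar π i h := by
    obtain ⟨m, hm⟩ := h
    obtain ⟨n, hn, hi, -⟩ := TermGraph.exists_of_isPos_append_singleton hm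
    rwa [labAt_eq hn]
  congr_lab _ _ h := by rw [h.2]
  congr_suc π _ i h hi := by
    obtain ⟨⟨n, hn⟩, rfl⟩ := h
    rw [labAt_eq hn] at hi
    exact ⟨⟨_, hn.step ⟨i, hi⟩⟩, rfl⟩

theorem unravellingLQT_sucClosed (g : CTG S) : g.unravellingLQT.SucClosed :=
  fun _ h i hi => (g.unravellingLQT.congr_suc _ _ i (g.unravellingLQT.rel_refl _ h) hi).1

noncomputable def unravelling (g : CTG S) : CTG S :=
  g.unravellingLQT.toCTG g.unravellingLQT_sucClosed

theorem isUnravelling_unravelling (g : CTG S) : IsUnravelling g g.unravelling :=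
  ⟨LQT.toCTG_pos _, fun _ h => LQT.toCTG_labAt _ h, fun _ _ => LQT.toCTG_aliases_iff _⟩

theorem IsUnravelling.leR {g h U V : CTG S.bot} (hU : IsUnravelling g U)
    (hV : IsUnravelling h V) (hgh : LeR g h) : LeR U V := by
  obtain ⟨φ, hφ⟩ := hgh
  refine (leR_iff_of_isTree hU.isTree).2 fun π n hn hlab => ?_
  have hπg : π ∈ g.pos := hU.1 ▸ ⟨n, hn⟩
  obtain ⟨n', hn'⟩ := hπg
  have hlabn' : g.tg.lab n' = U.tg.lab n := by
    rw [← labAt_eq hn', ← labAt_eq hn, hU.2.1 π ⟨n', hn'⟩]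
  have hπh : h.tg.IsPos π (φ n') := hφ.isPos hn'
  obtain ⟨m, hm⟩ : π ∈ V.pos := hV.1 ▸ ⟨_, hπh⟩
  refine ⟨m, hm, ?_, hV.isTree.nodePosAcy_eq hm⟩
  rw [← labAt_eq hm, hV.2.1 π ⟨_, hπh⟩, labAt_eq hπh, hφ.1.lab_eq n' (hlabn' ▸ hlab), hlabn']


theorem Aliases.of_leR {g h : CTG S.bot} (hgh : LeR g h) {π π' : List ℕ}
    (ha : g.Aliases π π') : h.Aliases π π' :=
  let ⟨_, hφ⟩ := hgh
  let ⟨_, hπ, hπ'⟩ := ha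
  ⟨_, hφ.isPos hπ, hφ.isPos hπ'⟩

theorem isAcyclicPos_iff {g : CTG S} {π : List ℕ} :
    g.tg.IsAcyclicPos π ↔
      ∀ π₁ π₂ : List ℕ, π₁ <+: π₂ → π₂ <+: π → g.Aliases π₁ π₂ → π₁ = π₂ :=
  ⟨fun h _ _ h₁ h₂ ⟨n, hn₁, hn₂⟩ => h _ _ n h₁ h₂ hn₁ hn₂,
    fun h _ _ n h₁ h₂ hn₁ hn₂ => h _ _ h₁ h₂ ⟨n, hn₁, hn₂⟩⟩

theorem leR_of_aliases {g h : CTG S.bot}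
    (halias : ∀ π π' : List ℕ, g.Aliases π π' → h.Aliases π π')
    (hlab : ∀ (π : List ℕ) (n : ↥g.nodes), g.tg.IsPos π n → g.tg.lab n ≠ none →
      h.labAt π = g.tg.lab n)
    (hacy : ∀ (π : List ℕ) (n : ↥g.nodes) (m : ↥h.nodes), g.tg.IsPos π n →
      g.tg.lab n ≠ none → h.tg.IsPos π m → h.tg.nodePosAcy m = g.tg.nodePosAcy n) :
    LeR g h := by
  have hpos : ∀ {π n}, g.tg.IsPos π n → h.tg.IsPos π (h.tg.nodeAt (g.posOf n)) := by
    intro π n hn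
    obtain ⟨m, hm, hm'⟩ := halias _ _ ⟨n, g.isPos_posOf n, hn⟩
    exact TermGraph.nodeAt_eq hm ▸ hm'
  refine ⟨fun n => h.tg.nodeAt (g.posOf n), ⟨⟨?_, fun n hn => ?_, fun n hn i hi hi' => ?_⟩,
    fun n hn => (hacy _ n _ (g.isPos_posOf n) hn (hpos (g.isPos_posOf n))).symm⟩⟩
  · exact TermGraph.eq_root_of_isPos_nil (hpos .root)
  · rw [← labAt_eq (hpos (g.isPos_posOf n)), hlab _ n (g.isPos_posOf n) hn]
  · exact (hpos ((g.isPos_posOf n).step ⟨i, hi⟩)).unique ((hpos (g.isPos_posOf n)).step ⟨i, hi'⟩)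

def HasLab (g : CTG S.bot) (π : List ℕ) (a : S.Sym) : Prop :=
  ∃ n : ↥g.nodes, g.tg.IsPos π n ∧ g.tg.lab n = some a

theorem HasLab.of_leR {g h : CTG S.bot} (hgh : LeR g h) {π : List ℕ} {a : S.Sym}
    (hg : g.HasLab π a) : h.HasLab π a :=
  let ⟨_, hφ⟩ := hgh
  let ⟨_, hn, ha⟩ := hg
  ⟨_, hφ.isPos hn, hφ.lab_eq_some ha⟩

theorem HasLab.lab_eq {g : CTG S.bot} {π : List ℕ} {a : S.Sym} (hg : g.HasLab π a)
    {n : ↥g.nodes} (hn : g.tg.IsPos π n) : g.tg.lab n = some a :=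
  let ⟨_, hn', ha⟩ := hg
  hn'.unique hn ▸ ha

section DirectedUnion

variable {F : Set (CTG S.bot)}

theorem DirectedR.hasLab_unique (hF : DirectedR F) {g g' : CTG S.bot} (hg : g ∈ F)
    (hg' : g' ∈ F) {π : List ℕ} {a b : S.Sym} (ha : g.HasLab π a) (hb : g'.HasLab π b) :
    a = b := by
  obtain ⟨u, -, hgu, hg'u⟩ := hF.2 g hg g' hg'
  obtain ⟨n, hn, hna⟩ := ha.of_leR hgu
  exact Option.some_injective _ (hna.symm.trans ((hb.of_leR hg'u).lab_eq hn))

theorem DirectedR.hasLab_of_aliases (hF : DirectedR F) {g g' : CTG S.bot} (hg : g ∈ F)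
    (hg' : g' ∈ F) {π π' : List ℕ} {a : S.Sym} (hπ : g.Aliases π π') (ha : g'.HasLab π a) :
    ∃ u ∈ F, u.HasLab π' a := by
  obtain ⟨u, hu, hgu, hg'u⟩ := hF.2 g hg g' hg'
  obtain ⟨m, hm, hm'⟩ := hπ.of_leR hgu
  exact ⟨u, hu, m, hm', (ha.of_leR hg'u).lab_eq hm⟩

variable (F)

open Classical in
noncomputable def unionLab (π : List ℕ) : Option S.Sym :=
  if h : ∃ a, ∃ g ∈ F, g.HasLab π a then some h.choose else none

variable {F}

theorem unionLab_eq_some_iff (hF : DirectedR F) {π : List ℕ} {a : S.Sym} :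
    unionLab F π = some a ↔ ∃ g ∈ F, g.HasLab π a := by
  by_cases h : ∃ a, ∃ g ∈ F, g.HasLab π a
  · obtain ⟨g, hg, hga⟩ := h.choose_spec
    rw [unionLab, dif_pos h, Option.some_inj]
    exact ⟨fun e => e ▸ ⟨g, hg, hga⟩, fun ⟨g', hg', hg'a⟩ => hF.hasLab_unique hg hg' hga hg'a⟩
  · rw [unionLab, dif_neg h]
    exact iff_of_false (by simp) fun ⟨g, hg, hga⟩ => h ⟨a, g, hg, hga⟩

theorem exists_hasLab_of_lt_ar_unionLab (hF : DirectedR F) {π : List ℕ} {i : ℕ}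
    (hi : i < S.bot.ar (unionLab F π)) :
    ∃ g ∈ F, ∃ n : ↥g.nodes, g.tg.IsPos π n ∧ g.tg.lab n = unionLab F π := by
  obtain ⟨a, ha⟩ := Signature.exists_eq_some_of_lt_ar_bot hi
  obtain ⟨g, hg, n, hn, hna⟩ := (unionLab_eq_some_iff hF).1 ha
  exact ⟨g, hg, n, hn, hna.trans ha.symm⟩

theorem unionLab_eq_of_aliases (hF : DirectedR F) {g : CTG S.bot} (hg : g ∈ F)
    {π π' : List ℕ} (hπ : g.Aliases π π') : unionLab F π = unionLab F π' := by
  have hπ' : g.Aliases π' π := let ⟨n, h, h'⟩ := hπ; ⟨n, h', h⟩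
  refine Option.ext fun a => ?_
  simp only [unionLab_eq_some_iff hF]
  exact ⟨fun ⟨_, hg', ha⟩ => hF.hasLab_of_aliases hg hg' hπ ha,
    fun ⟨_, hg', ha⟩ => hF.hasLab_of_aliases hg hg' hπ' ha⟩

variable (F)

noncomputable def unionLQT (hF : DirectedR F) : LQT S.bot where
  P := {π | ∃ g ∈ F, π ∈ g.pos}
  nonempty := let ⟨g, hg⟩ := hF.1; ⟨[], g, hg, _, .root⟩
  l := unionLab F
  rel π π' := ∃ g ∈ F, g.Aliases π π'
  rel_refl _ := fun ⟨g, hg, n, hn⟩ => ⟨g, hg, n, hn, hn⟩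
  rel_symm _ _ := fun ⟨g, hg, n, h, h'⟩ => ⟨g, hg, n, h', h⟩
  rel_trans _ _ _ := fun ⟨g, hg, hπ⟩ ⟨g', hg', hπ'⟩ => by
    obtain ⟨u, hu, hgu, hg'u⟩ := hF.2 g hg g' hg'
    obtain ⟨m, hm₁, hm₂⟩ := hπ.of_leR hgu
    obtain ⟨m', hm₂', hm₃⟩ := hπ'.of_leR hg'u
    exact ⟨u, hu, m, hm₁, hm₂.unique hm₂' ▸ hm₃⟩
  rel_mem _ _ := fun ⟨g, hg, n, h, h'⟩ => ⟨⟨g, hg, n, h⟩, ⟨g, hg, n, h'⟩⟩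
  reach_mem _ _ := fun ⟨g, hg, hπ⟩ => ⟨g, hg, TermGraph.mem_pos_of_append_singleton_mem hπ⟩
  reach_ar π i := fun ⟨g, hg, m, hm⟩ => by
    obtain ⟨n, hn, hi, -⟩ := TermGraph.exists_of_isPos_append_singleton hm
    obtain ⟨a, ha⟩ := Signature.exists_eq_some_of_lt_ar_bot hi
    rwa [(unionLab_eq_some_iff hF).2 ⟨g, hg, n, hn, ha⟩, ← ha]
  congr_lab _ _ := fun ⟨_, hg, hπ⟩ => unionLab_eq_of_aliases hF hg hπ
  congr_suc π π' i := fun ⟨g, hg, hπ⟩ hi => by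
    obtain ⟨g', hg', n, hn, hna⟩ := exists_hasLab_of_lt_ar_unionLab hF hi
    obtain ⟨u, hu, hgu, hg'u⟩ := hF.2 g hg g' hg'
    obtain ⟨m, hm, hm'⟩ := hπ.of_leR hgu
    obtain ⟨φ, hφ⟩ := hg'u
    have hmn : φ n = m := (hφ.isPos hn).unique hm
    have hi' : i < S.bot.ar (u.tg.lab m) := by
      rwa [← hmn, hφ.1.lab_eq n (hna ▸ Signature.ne_none_of_lt_ar_bot hi), hna]
    exact ⟨u, hu, _, hm.step ⟨i, hi'⟩, hm'.step ⟨i, hi'⟩⟩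

theorem unionLQT_sucClosed (hF : DirectedR F) : (unionLQT F hF).SucClosed := fun _ _ i hi => by
  obtain ⟨g, hg, n, hn, hna⟩ := exists_hasLab_of_lt_ar_unionLab hF hi
  exact ⟨g, hg, _, hn.step ⟨i, hna ▸ hi⟩⟩

noncomputable def union (hF : DirectedR F) : CTG S.bot :=
  (unionLQT F hF).toCTG (unionLQT_sucClosed F hF)

theorem isPos_iff_aliases {g : CTG S} {π π' : List ℕ} {n : ↥g.nodes} (hn : g.tg.IsPos π n) :
    g.tg.IsPos π' n ↔ g.Aliases π π' :=
  ⟨fun h => ⟨n, hn, h⟩, fun ⟨_, h, h'⟩ => hn.unique h ▸ h'⟩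

variable {F}

theorem union_isUB (hF : DirectedR F) : IsUB F (union F hF) := by
  intro g hg
  have haliases : ∀ {π π'}, (union F hF).Aliases π π' ↔ ∃ g ∈ F, g.Aliases π π' :=
    LQT.toCTG_aliases_iff _
  refine leR_of_aliases (fun π π' h => haliases.2 ⟨g, hg, h⟩) (fun π n hn hlab => ?_)
    (fun π n m hn hlab hm => ?_)
  · obtain ⟨a, ha⟩ := Option.ne_none_iff_exists'.1 hlab
    rw [ha, union, LQT.toCTG_labAt _ (show π ∈ (unionLQT F hF).P from ⟨g, hg, n, hn⟩)]
    exact (unionLab_eq_some_iff hF).2 ⟨g, hg, n, hn, ha⟩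
  ext π'
  simp only [TermGraph.nodePosAcy, Set.mem_ofPred_eq, isPos_iff_aliases hm, haliases,
    isAcyclicPos_iff]
  -- both inclusions are checked in an upper bound of `g` and the member witnessing the aliasing
  constructor
  · rintro ⟨⟨g', hg', hπ'⟩, hacy⟩
    obtain ⟨u, hu, ⟨χ, hχ⟩, hg'u⟩ := hF.2 g hg g' hg'
    have : π' ∈ u.tg.nodePosAcy (χ n) :=
      ⟨(isPos_iff_aliases (hχ.isPos hn)).2 (hπ'.of_leR hg'u),
        isAcyclicPos_iff.2 fun π₁ π₂ h₁ h₂ ha => hacy π₁ π₂ h₁ h₂ ⟨u, hu, ha⟩⟩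
    rw [← hχ.2 n hlab] at this
    exact ⟨this.1, isAcyclicPos_iff.1 this.2⟩
  · rintro ⟨hπ', hacy⟩
    refine ⟨⟨g, hg, (isPos_iff_aliases hn).1 hπ'⟩, fun π₁ π₂ h₁ h₂ ⟨g', hg', ha⟩ => ?_⟩
    obtain ⟨u, hu, ⟨χ, hχ⟩, hg'u⟩ := hF.2 g hg g' hg'
    have : π' ∈ u.tg.nodePosAcy (χ n) :=
      hχ.2 n hlab ▸ ⟨hπ', isAcyclicPos_iff.2 hacy⟩
    exact isAcyclicPos_iff.1 this.2 π₁ π₂ h₁ h₂ (ha.of_leR hg'u)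

end DirectedUnion

noncomputable def botLQT (S : Signature) : LQT S.bot where
  P := {[]}
  nonempty := ⟨[], rfl⟩
  l _ := none
  rel π π' := π = [] ∧ π' = []
  rel_refl _ h := ⟨h, h⟩
  rel_symm _ _ h := ⟨h.2, h.1⟩
  rel_trans _ _ _ h h' := ⟨h.1, h'.2⟩
  rel_mem _ _ h := ⟨h.1, h.2⟩
  reach_mem _ _ h := by simp at h
  reach_ar _ _ h := by simp at h
  congr_lab _ _ _ := rfl
  congr_suc _ _ i _ hi := absurd hi (Nat.not_lt_zero i)

theorem botLQT_sucClosed (S : Signature) : (botLQT S).SucClosed :=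
  fun _ _ i hi => absurd hi (Nat.not_lt_zero i)

theorem IsLubR.exists_hasLab {F : Set (CTG S.bot)} {L : CTG S.bot} (hL : IsLubR F L)
    (hF : ∀ g ∈ F, ∀ h ∈ F, ∃ u ∈ F, LeR g u ∧ LeR h u) {π : List ℕ} {a : S.Sym}
    (hπ : L.HasLab π a) : ∃ g ∈ F, g.HasLab π a := by
  rcases F.eq_empty_or_nonempty with rfl | hne
  · obtain ⟨_, _, ha⟩ := hπ.of_leR (hL.2 ((botLQT S).toCTG (botLQT_sucClosed S)) nofun)
    exact absurd ha (Option.some_ne_none a).symm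
  · have hdir : DirectedR F := ⟨hne, hF⟩
    obtain ⟨b, hb, hba⟩ := hπ.of_leR (hL.2 _ (union_isUB hdir))
    exact (unionLab_eq_some_iff hdir).1
      ((LQT.toTermGraph_lab_of_isPos (unionLQT_sucClosed F hdir) hb).symm.trans hba)

theorem IsUnravelling.hasLab_iff {g U : CTG S.bot} (hU : IsUnravelling g U) {π : List ℕ}
    {a : S.Sym} : U.HasLab π a ↔ g.HasLab π a := by
  have key : ∀ {h k : CTG S.bot}, h.pos = k.pos → (∀ π ∈ k.pos, h.labAt π = k.labAt π) →
      h.HasLab π a → k.HasLab π a := fun {h k} hpos hlab ⟨n, hn, ha⟩ => by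
    obtain ⟨m, hm⟩ : π ∈ k.pos := hpos ▸ (⟨n, hn⟩ : π ∈ h.pos)
    exact ⟨m, hm, by rw [← labAt_eq hm, ← hlab π ⟨m, hm⟩, labAt_eq hn, ha]⟩
  exact ⟨key hU.1 hU.2.1, key hU.1.symm fun π hπ => (hU.2.1 π (hU.1 ▸ hπ)).symm⟩

theorem IsGlbR.leR_of_subset {A B : Set (CTG S.bot)} {l m : CTG S.bot} (hl : IsGlbR A l)
    (hm : IsGlbR B m) (hBA : B ⊆ A) : LeR l m :=
  hm.2 l fun g hg => hl.1 g (hBA hg)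

theorem directed_of_isGlbR {α : Ordinal.{0}} {f inf : Ordinal.{0} → CTG S.bot}
    (hinf : ∀ β < α, IsGlbR {g | ∃ ι, β ≤ ι ∧ ι < α ∧ g = f ι} (inf β)) :
    ∀ g ∈ {g | ∃ β < α, g = inf β}, ∀ h ∈ {g | ∃ β < α, g = inf β},
      ∃ u ∈ {g | ∃ β < α, g = inf β}, LeR g u ∧ LeR h u := by
  rintro _ ⟨β, hβ, rfl⟩ _ ⟨β', hβ', rfl⟩
  have hmax := max_lt hβ hβ'
  refine ⟨_, ⟨_, hmax, rfl⟩, (hinf β hβ).leR_of_subset (hinf _ hmax) ?_,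
    (hinf β' hβ').leR_of_subset (hinf _ hmax) ?_⟩ <;>
  · rintro _ ⟨ι, hι, hια, rfl⟩
    exact ⟨ι, le_trans (by simp) hι, hια, rfl⟩

theorem IsLiminfR.leR_of_isUnravelling {α : Ordinal.{0}} {f u : Ordinal.{0} → CTG S.bot}
    {L L' Lu : CTG S.bot} (hu : ∀ ι < α, IsUnravelling (f ι) (u ι)) (hf : IsLiminfR α f L)
    (hu' : IsLiminfR α u L') (hL : IsUnravelling L Lu) : LeR Lu L' := by
  obtain ⟨inff, hinff, hlubf⟩ := hf
  obtain ⟨infu, hinfu, hlubu⟩ := hu'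
  refine (leR_iff_of_isTree hL.isTree).2 fun π n hn hlab => ?_
  obtain ⟨a, ha⟩ := Option.ne_none_iff_exists'.1 hlab
  obtain ⟨_, ⟨β, hβ, rfl⟩, hβa⟩ :=
    hlubf.exists_hasLab (directed_of_isGlbR hinff) (hL.hasLab_iff.1 ⟨n, hn, ha⟩)
  have hUβ := isUnravelling_unravelling (inff β)
  have hle : LeR (inff β).unravelling L' := by
    refine ((hinfu β hβ).2 _ ?_).trans (hlubu.1 _ ⟨β, hβ, rfl⟩)
    rintro _ ⟨ι, hβι, hια, rfl⟩
    exact hUβ.leR (hu ι hια) ((hinff β hβ).1 _ ⟨ι, hβι, hια, rfl⟩)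
  obtain ⟨n', hn', hn'a⟩ := hUβ.hasLab_iff.2 hβa
  obtain ⟨m, hm, hma, hacy⟩ := (leR_iff_of_isTree hUβ.isTree).1 hle π n' hn'
    (hn'a ▸ Option.some_ne_none a)
  exact ⟨m, hm, hma.trans (hn'a.trans ha.symm), hacy⟩


namespace IsTree

variable {T T₁ T₂ : CTG S.bot} {k : ℕ}

theorem retained_iff (hT : T.IsTree) {n : ↥T.nodes} : T.tg.Retained k n ↔ T.tg.depth n < k := by
  refine ⟨fun h => ?_, .shallow⟩
  induction h with
  | shallow h => exact h
  | pred _ hm ih =>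
    obtain ⟨π, i, ⟨hπi, -⟩, hπ⟩ := hm
    rw [hT.depth_eq hπi] at ih
    rw [hT.depth_eq hπ]
    simp only [List.length_append, List.length_singleton] at ih
    omega

theorem isFringe_iff (hT : T.IsTree) (hk : k ≠ 0) {n : ↥T.nodes} {i : ℕ} :
    T.tg.IsFringe k (n, i) ↔ ∃ _ : i < S.bot.ar (T.tg.lab n), T.tg.depth n + 1 = k := by
  have hsuc : ∀ hi : i < S.bot.ar (T.tg.lab n),
      T.tg.depth (T.tg.suc n ⟨i, hi⟩) = T.tg.depth n + 1 := fun hi => by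
    rw [hT.depth_eq ((T.isPos_posOf n).step ⟨i, hi⟩), hT.depth_eq (T.isPos_posOf n)]
    simp
  rw [TermGraph.IsFringe, if_neg hk]
  simp only [hT.retained_iff]
  refine ⟨fun ⟨hn, hi, h⟩ => ⟨hi, ?_⟩,
    fun ⟨hi, h⟩ => ⟨by omega, hi, .inl (by simp only [hsuc]; omega)⟩⟩
  rcases h with h | ⟨-, h⟩
  · simp only [hsuc] at h
    omega
  · exact absurd ⟨T.posOf n, i, ⟨(T.isPos_posOf n).step ⟨i, hi⟩, hT.isAcyclicPos _⟩,
      T.isPos_posOf n⟩ h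

theorem reachable_trunc (hT : T.IsTree) (hk : k ≠ 0) : (T.tg.trunc k).Reachable := by
  have hinl : ∀ {n} (hn : T.tg.Retained k n), ∃ x : TermGraph.TNode T.tg k,
      x.1 = Sum.inl n ∧ (T.tg.trunc k).IsPos (T.posOf n) x := fun {n} hn =>
    TermGraph.exists_isPos_trunc (T.isPos_posOf n)
      (hT.depth_eq (T.isPos_posOf n) ▸ hT.retained_iff.1 hn)
  rintro ⟨n | ⟨n, i⟩, hx⟩
  · obtain ⟨x, hxn, hx'⟩ := hinl hx
    obtain rfl : x = ⟨Sum.inl n, hx⟩ := by apply Subtype.ext; exact hxn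
    exact ⟨_, hx'⟩
  · obtain ⟨hi, hdep⟩ := (hT.isFringe_iff hk).1 hx
    obtain ⟨x, hxn, hx'⟩ := hinl (hT.retained_iff.2 (show T.tg.depth n < k by omega))
    have hi' : i < S.bot.ar ((T.tg.trunc k).lab x) := by
      rwa [TermGraph.trunc_lab_of_val_eq_inl hxn]
    have hsuc : (T.tg.trunc k).suc x ⟨i, hi'⟩ = ⟨Sum.inr (n, i), hx⟩ := by
      apply Subtype.ext
      exact TermGraph.trunc_suc_val_of_isFringe hxn hi' hx
    exact ⟨_, hsuc ▸ hx'.step ⟨i, hi'⟩⟩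

theorem nodeAt_posOf_of_agreeBelow (h₁ : T₁.IsTree) (h₂ : T₂.IsTree)
    (hagree : TermGraph.AgreeBelow T₁.tg T₂.tg k) {n : ↥T₁.nodes} (hn : T₁.tg.depth n < k) :
    T₂.tg.IsPos (T₁.posOf n) (T₂.tg.nodeAt (T₁.posOf n)) ∧
      T₂.tg.lab (T₂.tg.nodeAt (T₁.posOf n)) = T₁.tg.lab n ∧
      T₂.tg.depth (T₂.tg.nodeAt (T₁.posOf n)) = T₁.tg.depth n := by
  have hpos := T₁.isPos_posOf n
  have hlen : (T₁.posOf n).length < k := h₁.depth_eq hpos ▸ hn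
  obtain ⟨m, hm⟩ := (hagree _ hlen).1.1 ⟨n, hpos⟩
  rw [TermGraph.nodeAt_eq hm]
  refine ⟨hm, ?_, by rw [h₂.depth_eq hm, h₁.depth_eq hpos]⟩
  rw [← TermGraph.labAt_eq hm, ← (hagree _ hlen).2 ⟨n, hpos⟩, TermGraph.labAt_eq hpos]

theorem exists_isDHom_trunc (h₁ : T₁.IsTree) (h₂ : T₂.IsTree) (hk : k ≠ 0)
    (hagree : TermGraph.AgreeBelow T₁.tg T₂.tg k) :
    ∃ φ, TermGraph.IsDHom ∅ (T₁.tg.trunc k) (T₂.tg.trunc k) φ := by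
  set ν : ↥T₁.nodes → ↥T₂.nodes := fun n => T₂.tg.nodeAt (T₁.posOf n) with hνdef
  have hν : ∀ n, T₁.tg.depth n < k → T₂.tg.IsPos (T₁.posOf n) (ν n) ∧
      T₂.tg.lab (ν n) = T₁.tg.lab n ∧ T₂.tg.depth (ν n) = T₁.tg.depth n :=
    fun _ hn => nodeAt_posOf_of_agreeBelow h₁ h₂ hagree hn
  have hfringe : ∀ n i, T₁.tg.depth n < k →
      (T₁.tg.IsFringe k (n, i) ↔ T₂.tg.IsFringe k (ν n, i)) := fun n i hn => by
    rw [h₁.isFringe_iff hk, h₂.isFringe_iff hk, (hν n hn).2.1, (hν n hn).2.2]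
  have hmem : ∀ x : TermGraph.TNode T₁.tg k, Sum.elim (T₂.tg.Retained k) (T₂.tg.IsFringe k)
      (Sum.map ν (Prod.map ν id) x.1) := by
    rintro ⟨n | ⟨n, i⟩, hx⟩
    · have hn := h₁.retained_iff.1 hx
      exact h₂.retained_iff.2 ((hν n hn).2.2 ▸ hn)
    · have hn : T₁.tg.depth n < k := by
        obtain ⟨-, h⟩ := (h₁.isFringe_iff hk).1 hx
        omega
      exact (hfringe n i hn).1 hx
  refine ⟨fun x => ⟨_, hmem x⟩, ⟨?_, ?_, ?_⟩⟩
  · apply Subtype.ext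
    simp only [TermGraph.trunc_root_val hk, Sum.map_inl, hνdef, h₁.posOf_eq .root,
      TermGraph.nodeAt_eq .root]
  · rintro ⟨n | ⟨n, i⟩, hx⟩ -
    · exact (hν n (h₁.retained_iff.1 hx)).2.1
    · rfl
  · rintro ⟨n | ⟨n, j⟩, hx⟩ - i hi hi'
    · have hn := h₁.retained_iff.1 hx
      apply Subtype.ext
      by_cases hf : T₁.tg.IsFringe k (n, i)
      · simp only [TermGraph.trunc_suc_val_of_isFringe rfl hi hf,
          TermGraph.trunc_suc_val_of_isFringe rfl hi' ((hfringe n i hn).1 hf)]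
        rfl
      · have hsuc : ν (T₁.tg.suc n ⟨i, hi⟩) = T₂.tg.suc (ν n) ⟨i, hi'⟩ := by
          show T₂.tg.nodeAt (T₁.posOf _) = _
          rw [h₁.posOf_eq ((T₁.isPos_posOf n).step ⟨i, hi⟩)]
          exact TermGraph.nodeAt_eq ((hν n hn).1.step ⟨i, hi'⟩)
        simp only [TermGraph.trunc_suc_val_of_not_isFringe rfl hi hf,
          TermGraph.trunc_suc_val_of_not_isFringe rfl hi' (mt (hfringe n i hn).2 hf)]
        exact congrArg Sum.inl hsuc
    · exact absurd hi (Nat.not_lt_zero i)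

theorem iso_trunc (h₁ : T₁.IsTree) (h₂ : T₂.IsTree) (hk : k ≠ 0)
    (hagree : TermGraph.AgreeBelow T₁.tg T₂.tg k) :
    TermGraph.Iso (T₁.tg.trunc k) (T₂.tg.trunc k) :=
  let ⟨_, hφ⟩ := exists_isDHom_trunc h₁ h₂ hk hagree
  let ⟨_, hψ⟩ := exists_isDHom_trunc h₂ h₁ hk hagree.symm
  TermGraph.iso_of_isDHom (h₁.reachable_trunc hk) (h₂.reachable_trunc hk) hφ hψ

end IsTree

theorem TruncIso.agreeBelow {N M : Type} {g : TermGraph S.bot N} {h : TermGraph S.bot M}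
    {d : ℕ∞} (hd : TruncIso g h d) {k : ℕ} (hk : (k : ℕ∞) ≤ d) : g.AgreeBelow h k := by
  cases d with
  | top => exact (hd.1 rfl).agreeBelow k
  | coe m => exact (TermGraph.agreeBelow_of_iso_trunc (hd.2 m rfl)).mono (by exact_mod_cast hk)

theorem IsUnravelling.agreeBelow {g h U V : CTG S} (hU : IsUnravelling g U)
    (hV : IsUnravelling h V) {k : ℕ} (hgh : g.tg.AgreeBelow h.tg k) : U.tg.AgreeBelow V.tg k := by
  intro π hπ
  have hUπ : π ∈ U.tg.pos ↔ π ∈ g.tg.pos := Set.ext_iff.1 hU.1 π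
  have hVπ : π ∈ V.tg.pos ↔ π ∈ h.tg.pos := Set.ext_iff.1 hV.1 π
  refine ⟨hUπ.trans ((hgh π hπ).1.trans hVπ.symm), fun hp => ?_⟩
  have hp' := hUπ.1 hp
  exact (hU.2.1 π hp').trans (((hgh π hπ).2 hp').trans (hV.2.1 π ((hgh π hπ).1.1 hp')).symm)

theorem simr_le_simr_of_isUnravelling {g h U V : CTG S.bot} (hU : IsUnravelling g U)
    (hV : IsUnravelling h V) : simr g h ≤ simr U V := by
  refine sSup_le fun d hd => ENat.forall_natCast_le_iff_le.1 fun k hk => ?_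
  rcases Nat.eq_zero_or_pos k with rfl | hk0
  · exact bot_le
  · refine le_sSup ⟨fun htop => absurd htop (ENat.natCast_ne_top k), fun m hm => ?_⟩
    obtain rfl : m = k := by exact_mod_cast hm.symm
    exact hU.isTree.iso_trunc hV.isTree hk0.ne' (hU.agreeBelow hV (hd.agreeBelow hk))

theorem rdist_le_of_simr_le {g h g' h' : CTG S.bot} (hs : simr g h ≤ simr g' h') :
    rdist g' h' ≤ rdist g h := by
  by_cases htop' : simr g' h' = ⊤
  · rw [rdist, if_pos htop', rdist]
    split_ifs <;> positivity
  · rw [rdist, rdist, if_neg htop', if_neg (ne_top_of_le_ne_top htop' hs)]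
    exact pow_le_pow_of_le_one (by norm_num) (by norm_num) (ENat.toNat_le_toNat hs htop')

theorem OrdTendsto.unravelling {α : Ordinal.{0}} {f u : Ordinal.{0} → CTG S.bot}
    {g gu : CTG S.bot} (hf : OrdTendsto α f g) (hu : ∀ ι < α, IsUnravelling (f ι) (u ι))
    (hg : IsUnravelling g gu) : OrdTendsto α u gu := fun ε hε =>
  let ⟨β, hβ, hconv⟩ := hf ε hε
  ⟨β, hβ, fun ι hβι hια => (rdist_le_of_simr_le
    (simr_le_simr_of_isUnravelling (hu ι hια) hg)).trans_lt (hconv ι hβι hια)⟩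

end CTG

/-- Unravelling weakly preserves the limit inferior:
`U(liminf g_ι) ≤⊥r liminf U(g_ι)`; and it fully preserves metric limits: if a
non-empty sequence of total canonical term graphs converges w.r.t. `d†`, then
the sequence of unravellings converges to the unravelling of the limit. -/
theorem unravelling_preserves_limits (S : Signature) :
    (∀ (α : Ordinal.{0}) (f u : Ordinal.{0} → CTG S.bot) (L L' Lu : CTG S.bot),
      (∀ ι < α, CTG.IsUnravelling (f ι) (u ι)) →
      CTG.IsLiminfR α f L → CTG.IsLiminfR α u L' →
      CTG.IsUnravelling L Lu → CTG.LeR Lu L') ∧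
    (∀ (α : Ordinal.{0}), α ≠ 0 →
      ∀ (f u : Ordinal.{0} → CTG S.bot) (g gu : CTG S.bot),
      (∀ ι < α, (f ι).Total) →
      (∀ ι < α, CTG.IsUnravelling (f ι) (u ι)) →
      g.Total → CTG.OrdTendsto α f g →
      CTG.IsUnravelling g gu →
      CTG.OrdTendsto α u gu) :=
  ⟨fun _ _ _ _ _ _ hu hf hu' hL => hf.leR_of_isUnravelling hu hu' hL,
    fun _ _ _ _ _ _ _ hu _ hf hg => hf.unravelling hu hg⟩

end TGR
end
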